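/- For m ≥ 2, n ≥ 2, and d a divisor of n, the SL(m, Z_n)-orbit of the vector (0,...,0,d) in (Z_n)^m has exactly J_m(n/d) = (n/d)^m ∏_{p | (n/d), p prime} (1 − p^{−m}) elements. -/

import Mathlib

open Matrix

/-!
A vector over `ℤ/n` lies in the `SL`-orbit of a standard basis vector exactly when it is
unimodular (its entries generate the unit ideal). This uses that `ℤ/n` has stable rank one:
an elementary matrix moves a unimodular vector to one with a unit coordinate, and such a
vector is a row of a matrix of determinant one. So the orbit of `d • eᵢ` is `d` times the
unimodular vectors mod `n`. Multiplication by `d` only sees residues mod `k = n / d`, where it is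
injective, and unimodular vectors mod `n` reduce onto those mod `k` (stable rank one again,
together with lifting of units). Finally, unimodular vectors mod `k` are counted through the
Chinese remainder theorem: over the local ring `ℤ/pᵉ` they are the vectors not contained in the
maximal ideal, of which there are `p^(e m) - p^((e-1) m)`.
-/

section Unimodular

variable {ι R S : Type*} [CommRing R] [CommRing S]

def IsUnimodular (v : ι → R) : Prop :=
  Ideal.span (Set.range v) = ⊤

theorem isUnimodular_iff_exists_dotProduct_eq_one [Fintype ι] {v : ι → R} :
    IsUnimodular v ↔ ∃ c, v ⬝ᵥ c = 1 := by
  simp only [IsUnimodular, Ideal.eq_top_iff_one, Ideal.mem_span_range_iff_exists_fun,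
    dotProduct_comm v]
  rfl

theorem IsUnimodular.of_isUnit_dotProduct [Fintype ι] {v c : ι → R} (h : IsUnit (v ⬝ᵥ c)) :
    IsUnimodular v :=
  isUnimodular_iff_exists_dotProduct_eq_one.2
    ⟨(↑h.unit⁻¹ : R) • c, by rw [dotProduct_smul, smul_eq_mul, h.val_inv_mul]⟩

theorem isUnimodular_single_one [Fintype ι] [DecidableEq ι] (i : ι) :
    IsUnimodular (Pi.single i (1 : R)) :=
  .of_isUnit_dotProduct (c := Pi.single i 1) (by simp)

theorem IsUnimodular.comp_ringHom {v : ι → R} (hv : IsUnimodular v) (f : R →+* S) :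
    IsUnimodular (f ∘ v) := by
  rw [IsUnimodular, Set.range_comp, ← Ideal.map_span, hv, Ideal.map_top]

theorem isUnimodular_comp_ringEquiv_iff {v : ι → R} (e : R ≃+* S) :
    IsUnimodular (e ∘ v) ↔ IsUnimodular v := by
  refine ⟨fun h => ?_, fun h => h.comp_ringHom e.toRingHom⟩
  simpa [Function.comp_def] using h.comp_ringHom e.symm.toRingHom

theorem isUnimodular_prod_iff [Fintype ι] {v : ι → R × S} :
    IsUnimodular v ↔ IsUnimodular (Prod.fst ∘ v) ∧ IsUnimodular (Prod.snd ∘ v) := by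
  refine ⟨fun h => ⟨h.comp_ringHom (RingHom.fst R S), h.comp_ringHom (RingHom.snd R S)⟩, ?_⟩
  simp only [isUnimodular_iff_exists_dotProduct_eq_one]
  rintro ⟨⟨c, hc⟩, ⟨c', hc'⟩⟩
  exact ⟨fun i => (c i, c' i), Prod.ext (by simpa [dotProduct, Prod.fst_sum] using hc)
    (by simpa [dotProduct, Prod.snd_sum] using hc')⟩

theorem IsUnimodular.vecMul [Fintype ι] [DecidableEq ι] {v : ι → R} (hv : IsUnimodular v)
    (A : Matrix.SpecialLinearGroup ι R) : IsUnimodular (v ᵥ* (A : Matrix ι ι R)) := by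
  obtain ⟨c, hc⟩ := isUnimodular_iff_exists_dotProduct_eq_one.1 hv
  refine isUnimodular_iff_exists_dotProduct_eq_one.2
    ⟨((A⁻¹ : Matrix.SpecialLinearGroup ι R) : Matrix ι ι R) *ᵥ c, ?_⟩
  rw [← dotProduct_mulVec, mulVec_mulVec, ← Matrix.SpecialLinearGroup.coe_mul A A⁻¹,
    mul_inv_cancel, Matrix.SpecialLinearGroup.coe_one, one_mulVec, hc]

end Unimodular

def HasStableRankOne (R : Type*) [CommRing R] : Prop :=
  ∀ a b : R, IsCoprime a b → ∃ t, IsUnit (a + t * b)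

section StableRankOne

variable {ι R S : Type*} [Fintype ι] [DecidableEq ι] [CommRing R] [CommRing S]

theorem IsUnimodular.exists_dotProduct_isUnit (hR : HasStableRankOne R) {v : ι → R}
    (hv : IsUnimodular v) (i₀ : ι) : ∃ c : ι → R, c i₀ = 1 ∧ IsUnit (v ⬝ᵥ c) := by
  obtain ⟨x, hx⟩ := isUnimodular_iff_exists_dotProduct_eq_one.1 hv
  -- `1 - x i₀ * v i₀` is the contribution of the other coordinates to `v ⬝ᵥ x = 1`.
  obtain ⟨t, ht⟩ := hR (v i₀) (1 - x i₀ * v i₀) ⟨x i₀, 1, by ring⟩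
  refine ⟨t • x + (1 - t * x i₀) • Pi.single i₀ 1, by simp, ?_⟩
  convert ht using 1
  rw [dotProduct_add, dotProduct_smul, dotProduct_smul, hx, dotProduct_single]
  simp only [smul_eq_mul]
  ring

theorem exists_single_one_vecMul_eq_of_isUnit {i₀ i₁ : ι} (h : i₁ ≠ i₀) {w : ι → R}
    (hw : IsUnit (w i₀)) :
    ∃ A : Matrix.SpecialLinearGroup ι R, Pi.single i₀ 1 ᵥ* (A : Matrix ι ι R) = w := by
  -- Rows of `B`: `w` at `i₀` and `eᵢ` elsewhere, the one at `i₁` scaled by `(w i₀)⁻¹`.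
  let e : ι → R := Pi.single i₀ 1
  let D : ι → R := Function.update 1 i₁ ↑hw.unit⁻¹
  have hD : D i₀ = 1 := by simp [D, Function.update_of_ne h.symm]
  let B := diagonal D * (1 + vecMulVec e (w - e))
  have hB : B.det = 1 := by
    rw [det_mul, det_diagonal, vecMulVec_eq Unit, det_one_add_replicateCol_mul_replicateRow,
      Finset.prod_update_of_mem (Finset.mem_univ _)]
    simp [e, hw.val_inv_mul]
  refine ⟨⟨B, hB⟩, ?_⟩
  simp [B, ← vecMul_vecMul, hD, vecMul_add, vecMul_vecMulVec, e]

theorem IsUnimodular.exists_single_one_vecMul_eq [Nontrivial ι] (hR : HasStableRankOne R)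
    (i₀ : ι) {v : ι → R} (hv : IsUnimodular v) :
    ∃ A : Matrix.SpecialLinearGroup ι R, Pi.single i₀ 1 ᵥ* (A : Matrix ι ι R) = v := by
  obtain ⟨i₁, h⟩ := exists_ne i₀
  obtain ⟨c, hc₀, hc⟩ := hv.exists_dotProduct_isUnit hR i₀
  let E : Matrix.SpecialLinearGroup ι R :=
    ⟨1 + vecMulVec (c - Pi.single i₀ 1) (Pi.single i₀ 1), by
      rw [vecMulVec_eq Unit, det_one_add_replicateCol_mul_replicateRow]
      simp [hc₀]⟩
  have hvE : (v ᵥ* E) i₀ = v ⬝ᵥ c := by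
    simp [E, vecMul_add, vecMul_vecMulVec, dotProduct_sub]
  obtain ⟨B, hB⟩ := exists_single_one_vecMul_eq_of_isUnit h (hvE ▸ hc)
  refine ⟨B * E⁻¹, ?_⟩
  rw [Matrix.SpecialLinearGroup.coe_mul B E⁻¹, ← vecMul_vecMul, hB, vecMul_vecMul,
    ← Matrix.SpecialLinearGroup.coe_mul E E⁻¹, mul_inv_cancel,
    Matrix.SpecialLinearGroup.coe_one, vecMul_one]

theorem exists_single_one_vecMul_eq_iff [Nontrivial ι] (hR : HasStableRankOne R) (i₀ : ι)
    {v : ι → R} :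
    (∃ A : Matrix.SpecialLinearGroup ι R, Pi.single i₀ 1 ᵥ* (A : Matrix ι ι R) = v) ↔
      IsUnimodular v :=
  ⟨by rintro ⟨A, rfl⟩; exact (isUnimodular_single_one i₀).vecMul A,
    fun hv => hv.exists_single_one_vecMul_eq hR i₀⟩

theorem IsUnimodular.exists_lift [Nonempty ι] {f : R →+* S} (hf : Function.Surjective f)
    (hfu : Function.Surjective (Units.map (f : R →* S))) (hS : HasStableRankOne S) {u : ι → S}
    (hu : IsUnimodular u) : ∃ r : ι → R, IsUnimodular r ∧ f ∘ r = u := by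
  let i₀ : ι := Classical.arbitrary ι
  obtain ⟨c, hc₀, hc⟩ := hu.exists_dotProduct_isUnit hS i₀
  obtain ⟨W, hW⟩ := hfu hc.unit
  -- Correct a lift of `u` at `i₀` so that it pairs with a lift of `c` to the unit `W`.
  choose r' hr' using fun i => hf (u i)
  choose C' hC' using fun i => hf (c i)
  let C := Function.update C' i₀ 1
  have hC : f ∘ C = c := by
    ext i
    by_cases hi : i = i₀
    · subst hi; simp [C, hc₀]
    · simp [C, hi, hC']
  let δ := (W : R) - r' ⬝ᵥ C
  have hδ : f δ = 0 := by
    have hfW : f W = u ⬝ᵥ c := congrArg Units.val hW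
    rw [map_sub, RingHom.map_dotProduct, hC, hfW, show f ∘ r' = u from funext hr', sub_self]
  let r := r' + Pi.single i₀ δ
  have hrC : r ⬝ᵥ C = W := by simp [r, add_dotProduct, C, δ]
  refine ⟨r, .of_isUnit_dotProduct (hrC ▸ W.isUnit), ?_⟩
  ext i
  by_cases hi : i = i₀
  · subst hi; simp [r, hr', hδ]
  · simp [r, hr', hi]

theorem image_comp_setOf_isUnimodular [Nonempty ι] {f : R →+* S} (hf : Function.Surjective f)
    (hfu : Function.Surjective (Units.map (f : R →* S))) (hS : HasStableRankOne S) :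
    (f ∘ ·) '' {r : ι → R | IsUnimodular r} = {u | IsUnimodular u} := by
  ext u
  refine ⟨?_, fun hu => hu.exists_lift hf hfu hS⟩
  rintro ⟨r, hr, rfl⟩
  exact hr.comp_ringHom f

end StableRankOne

theorem ZMod.hasStableRankOne (n : ℕ) [NeZero n] : HasStableRankOne (ZMod n) := by
  rintro a b ⟨x, y, hxy⟩
  -- With `b = u * e`, `a` is a unit mod `e`; a unit lifting it differs from `a` by a multiple
  -- of `e`.
  obtain ⟨e, he, u, hu, rfl⟩ := ZMod.eq_unit_mul_divisor b
  let π := ZMod.castHom he (ZMod e)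
  have hπe : π e = 0 := by simp [π]
  have hπa : IsUnit (π a) :=
    IsUnit.of_mul_eq_one_right (π x) (by simpa [hπe] using congrArg π hxy)
  obtain ⟨W, hW⟩ := ZMod.unitsMap_surjective he hπa.unit
  have hπW : π (W - a) = 0 := by
    rw [map_sub, sub_eq_zero]
    exact congrArg Units.val hW
  obtain ⟨s, hs⟩ : ∃ s, (W : ZMod n) - a = e * s := by
    rw [← ZMod.natCast_zmod_val ((W : ZMod n) - a), map_natCast, ZMod.natCast_eq_zero_iff] at hπW
    obtain ⟨s, hs⟩ := hπW
    exact ⟨s, by rw [← ZMod.natCast_zmod_val ((W : ZMod n) - a), hs, Nat.cast_mul]⟩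
  refine ⟨s * ↑hu.unit⁻¹, ?_⟩
  convert W.isUnit using 1
  linear_combination (-hs) + (s * e) * hu.val_inv_mul

def ZMod.scaleHom (d k : ℕ) : ZMod k →+ ZMod (d * k) :=
  ZMod.lift k ⟨(AddMonoidHom.mulLeft (d : ZMod (d * k))).comp (Int.castAddHom _), by
    simp [← Nat.cast_mul]⟩

theorem ZMod.scaleHom_castHom (d k : ℕ) (x : ZMod (d * k)) :
    ZMod.scaleHom d k (ZMod.castHom (dvd_mul_left k d) (ZMod k) x) = d * x := by
  obtain ⟨z, rfl⟩ := ZMod.intCast_surjective x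
  simp [ZMod.scaleHom]

theorem ZMod.scaleHom_injective {d : ℕ} (hd : d ≠ 0) (k : ℕ) :
    Function.Injective (ZMod.scaleHom d k) := by
  refine (injective_iff_map_eq_zero _).2 fun x hx => ?_
  obtain ⟨z, rfl⟩ := ZMod.intCast_surjective x
  simp only [ZMod.scaleHom, ZMod.lift_coe, AddMonoidHom.coe_comp, Function.comp_apply,
    Int.coe_castAddHom, AddMonoidHom.coe_mulLeft] at hx
  rw [← Int.cast_natCast, ← Int.cast_mul, ZMod.intCast_zmod_eq_zero_iff_dvd, Nat.cast_mul] at hx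
  rw [ZMod.intCast_zmod_eq_zero_iff_dvd]
  exact Int.dvd_of_mul_dvd_mul_left (by exact_mod_cast hd) hx

theorem setOf_exists_single_natCast_vecMul_eq {ι : Type*} [Fintype ι] [DecidableEq ι]
    [Nontrivial ι] (d k : ℕ) [NeZero d] [NeZero k] (i₀ : ι) :
    {a : ι → ZMod (d * k) | ∃ A : Matrix.SpecialLinearGroup ι (ZMod (d * k)),
        Pi.single i₀ (d : ZMod (d * k)) ᵥ* (A : Matrix ι ι (ZMod (d * k))) = a}
      = (ZMod.scaleHom d k ∘ ·) '' {u | IsUnimodular u} := by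
  have hk : k ∣ d * k := dvd_mul_left k d
  have hscale (r : ι → ZMod (d * k)) :
      ZMod.scaleHom d k ∘ ZMod.castHom hk (ZMod k) ∘ r = (d : ZMod (d * k)) • r :=
    funext fun i => ZMod.scaleHom_castHom d k (r i)
  calc _ = ((d : ZMod (d * k)) • ·) '' {r | ∃ A : Matrix.SpecialLinearGroup ι (ZMod (d * k)),
          Pi.single i₀ 1 ᵥ* (A : Matrix ι ι (ZMod (d * k))) = r} := by
        ext a
        simp [single_vecMul]
    _ = ((d : ZMod (d * k)) • ·) '' {r | IsUnimodular r} := by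
        simp_rw [exists_single_one_vecMul_eq_iff (ZMod.hasStableRankOne _) i₀]
    _ = _ := by
        rw [← image_comp_setOf_isUnimodular (ZMod.ringHom_surjective (ZMod.castHom hk (ZMod k)))
          (by simpa [ZMod.unitsMap_def] using ZMod.unitsMap_surjective hk)
          (ZMod.hasStableRankOne k), Set.image_image]
        simp_rw [hscale]

section Counting

variable {ι R S : Type*} [CommRing R] [CommRing S]

theorem card_isUnimodular_congr (e : R ≃+* S) :
    Nat.card {v : ι → R // IsUnimodular v} = Nat.card {v : ι → S // IsUnimodular v} :=
  Nat.card_congr <| (Equiv.piCongrRight fun _ => e.toEquiv).subtypeEquiv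
    fun _ => (isUnimodular_comp_ringEquiv_iff e).symm

theorem card_isUnimodular_prod [Fintype ι] :
    Nat.card {v : ι → R × S // IsUnimodular v} =
      Nat.card {v : ι → R // IsUnimodular v} * Nat.card {v : ι → S // IsUnimodular v} := by
  rw [← Nat.card_prod]
  exact Nat.card_congr <| ((Equiv.arrowProdEquivProdArrow ι (fun _ => R) (fun _ => S)).subtypeEquiv
    fun _ => isUnimodular_prod_iff).trans Equiv.subtypeProdEquivProd

theorem isUnimodular_iff_exists_isUnit [IsLocalRing R] {v : ι → R} :
    IsUnimodular v ↔ ∃ i, IsUnit (v i) := by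
  have : (∀ i, ¬IsUnit (v i)) ↔ Ideal.span (Set.range v) ≤ IsLocalRing.maximalIdeal R := by
    simp [Ideal.span_le, Set.range_subset_iff, mem_nonunits_iff]
  rw [IsUnimodular, ← not_iff_not, not_exists, this]
  exact ⟨IsLocalRing.le_maximalIdeal,
    ne_top_of_le_ne_top (IsLocalRing.maximalIdeal.isMaximal R).ne_top⟩

theorem card_isUnimodular_of_isLocalRing [Fintype ι] [Finite R] [IsLocalRing R] :
    Nat.card {v : ι → R // IsUnimodular v} =
      Nat.card R ^ Fintype.card ι - Nat.card (IsLocalRing.maximalIdeal R) ^ Fintype.card ι := by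
  have hcompl : Nat.card {v : ι → R // ¬IsUnimodular v} =
      Nat.card (IsLocalRing.maximalIdeal R) ^ Fintype.card ι := by
    have e : {v : ι → R // ¬IsUnimodular v} ≃ (ι → IsLocalRing.maximalIdeal R) :=
      (Equiv.subtypeEquivRight fun v => by
        simp [isUnimodular_iff_exists_isUnit, mem_nonunits_iff]).trans
        Equiv.subtypePiEquivPi
    rw [Nat.card_congr e, Nat.card_fun, Nat.card_eq_fintype_card (α := ι)]
  have := Set.ncard_add_ncard_compl {v : ι → R | IsUnimodular v}
  rw [← Nat.card_coe_set_eq, ← Nat.card_coe_set_eq, Set.coe_ofPred, Set.compl_ofPred,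
    Set.coe_ofPred, hcompl, Nat.card_fun, Nat.card_eq_fintype_card (α := ι)] at this
  omega

theorem card_units_add_card_maximalIdeal [Finite R] [IsLocalRing R] :
    Nat.card Rˣ + Nat.card (IsLocalRing.maximalIdeal R) = Nat.card R := by
  rw [← Set.ncard_add_ncard_compl (Set.range ((↑) : Rˣ → R)), ← Nat.card_coe_set_eq,
    ← Nat.card_coe_set_eq, Nat.card_range_of_injective Units.val_injective]
  -- `(Set.range Units.val)ᶜ` is the maximal ideal by definition
  congr 1

end Counting

theorem ZMod.isLocalRing_prime_pow {p e : ℕ} [Fact p.Prime] (he : e ≠ 0) :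
    IsLocalRing (ZMod (p ^ e)) :=
  have : Fact (1 < p ^ e) := ⟨Nat.one_lt_pow he (Fact.out : p.Prime).one_lt⟩
  .of_surjective' (PadicInt.toZModPow e) (ZMod.ringHom_surjective _)

theorem card_isUnimodular_zmod_prime_pow {ι : Type*} [Fintype ι] {p e : ℕ} (hp : p.Prime)
    (he : e ≠ 0) : Nat.card {v : ι → ZMod (p ^ e) // IsUnimodular v} =
      (p ^ e) ^ Fintype.card ι - (p ^ (e - 1)) ^ Fintype.card ι := by
  have := Fact.mk hp
  have := ZMod.isLocalRing_prime_pow (p := p) he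
  have hmax : Nat.card (IsLocalRing.maximalIdeal (ZMod (p ^ e))) = p ^ (e - 1) := by
    have h := card_units_add_card_maximalIdeal (R := ZMod (p ^ e))
    rw [Nat.card_zmod, Nat.card_eq_fintype_card, ZMod.card_units_eq_totient,
      Nat.totient_prime_pow hp (Nat.pos_of_ne_zero he)] at h
    obtain ⟨e, rfl⟩ := Nat.exists_eq_add_one_of_ne_zero he
    obtain ⟨q, rfl⟩ := Nat.exists_eq_add_one_of_ne_zero hp.ne_zero
    simp only [Nat.add_sub_cancel, pow_succ] at h ⊢
    nlinarith
  rw [card_isUnimodular_of_isLocalRing, hmax, Nat.card_zmod]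

theorem card_isUnimodular_zmod {ι : Type*} [Fintype ι] {k : ℕ} (hk : k ≠ 0) :
    (Nat.card {v : ι → ZMod k // IsUnimodular v} : ℚ) =
      (k : ℚ) ^ Fintype.card ι *
        ∏ p ∈ k.primeFactors, (1 - 1 / (p : ℚ) ^ Fintype.card ι) := by
  induction k using Nat.recOnPosPrimePosCoprime with
  | prime_pow p e hp he =>
    have hle : (p ^ (e - 1)) ^ Fintype.card ι ≤ (p ^ e) ^ Fintype.card ι := by
      gcongr
      · exact hp.one_le
      · omega
    rw [card_isUnimodular_zmod_prime_pow hp he.ne', Nat.primeFactors_prime_pow he.ne' hp,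
      Finset.prod_singleton, Nat.cast_sub hle]
    obtain ⟨e, rfl⟩ := Nat.exists_eq_add_one_of_ne_zero he.ne'
    have : (p : ℚ) ≠ 0 := by exact_mod_cast hp.ne_zero
    push_cast
    field_simp
    ring
  | zero => exact absurd rfl hk
  | one =>
    have : Unique {v : ι → ZMod 1 // IsUnimodular v} :=
      ⟨⟨⟨0, Subsingleton.elim _ _⟩⟩, fun _ => Subsingleton.elim _ _⟩
    simp
  | coprime a b ha hb hab iha ihb =>
    rw [card_isUnimodular_congr (ZMod.chineseRemainder hab), card_isUnimodular_prod, Nat.cast_mul,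
      iha (by omega), ihb (by omega), hab.primeFactors_mul,
      Finset.prod_union hab.disjoint_primeFactors]
    push_cast
    ring

/-- For m ≥ 2, n ≥ 2 and d | n, the SL(m, Z_n)-orbit of (0,…,0,d) has exactly
J_m(n/d) = (n/d)^m · ∏_{p | n/d prime} (1 − p^{−m}) elements. -/
theorem orbit_card_eq_jordan (m n d : ℕ) (hn : 2 ≤ n) (hm : 2 ≤ m)
    (hd : d ∣ n) :
    (Set.ncard {a : Fin m → ZMod n |
        ∃ A : Matrix.SpecialLinearGroup (Fin m) (ZMod n),
          vecMul (Pi.single (⟨m - 1, by omega⟩ : Fin m) ((d : ZMod n)))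
            (A : Matrix (Fin m) (Fin m) (ZMod n)) = a} : ℚ)
      = ((n / d : ℕ) : ℚ) ^ m *
          ∏ p ∈ (n / d).primeFactors, (1 - 1 / (p : ℚ) ^ m) := by
  obtain ⟨k, rfl⟩ := hd
  have : NeZero d := ⟨by rintro rfl; omega⟩
  have : NeZero k := ⟨by rintro rfl; omega⟩
  have : Nontrivial (Fin m) := Fin.nontrivial_iff_two_le.2 hm
  rw [Nat.mul_div_cancel_left k (NeZero.pos d),
    setOf_exists_single_natCast_vecMul_eq d k,
    Set.ncard_image_of_injective _ (ZMod.scaleHom_injective (NeZero.ne d) k).comp_left,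
    ← Nat.card_coe_set_eq, Set.coe_ofPred, card_isUnimodular_zmod (NeZero.ne k), Fintype.card_fin]
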